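/- Let d > 1 be an integer and A a d-collection. Suppose B and C are two normal d-collections each obtained from A by a finite sequence of elementary exchanges, where each exchange in each sequence is applied at an index whose current entry is at least 2d − 1. Then B = C; i.e., the resulting normal d-collection is independent of the order in which such exchanges are applied. -/
import Mathlib


/-- The span of a `d`-collection `A : ℕ →₀ ℕ` (where `A i` is the multiplicity of the
token `d ^ i`): the set of all sums `∑ i, c i * d ^ i` over sub-collections `c ≤ A`. -/
def dspan (d : ℕ) (A : ℕ →₀ ℕ) : Set ℕ :=
  {n : ℕ | ∃ c : ℕ →₀ ℕ, (∀ i, c i ≤ A i) ∧ n = c.sum (fun i m => m * d ^ i)}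

/-- The total sum `∑ i, a_i * d ^ i` of a `d`-collection. -/
def dsum (d : ℕ) (A : ℕ →₀ ℕ) : ℕ := A.sum (fun i m => m * d ^ i)

/-- Elementary exchange at index `i`: replace `d` tokens `d ^ i` by one token `d ^ (i+1)`. -/
noncomputable def exch (d i : ℕ) (A : ℕ →₀ ℕ) : ℕ →₀ ℕ :=
  A - Finsupp.single i d + Finsupp.single (i + 1) 1

lemma exch_apply (d i : ℕ) (A : ℕ →₀ ℕ) (k : ℕ) :
    exch d i A k = A k - (if i = k then d else 0) + (if i + 1 = k then 1 else 0) := by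
  simp [exch, Finsupp.tsub_apply, Finsupp.single_apply]

lemma exch_comm (d i j : ℕ) (A : ℕ →₀ ℕ) (hi : d ≤ A i) (hj : d ≤ A j) :
    exch d j (exch d i A) = exch d i (exch d j A) := by
  ext k
  simp only [exch_apply]
  rcases eq_or_ne i j with rfl | hij
  · rfl
  · split_ifs <;> subst_vars <;> omega

/-- Confluence: if two normal `d`-collections are each obtained from `A` by finite
sequences of elementary exchanges applied at indices with current entry `≥ 2d - 1`,
then they coincide. -/
theorem stmt_15 (d : ℕ) (hd : 1 < d) (A B C : ℕ →₀ ℕ)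
    (hB : Relation.ReflTransGen
      (fun X Y : ℕ →₀ ℕ => ∃ i, 2 * d - 1 ≤ X i ∧ Y = exch d i X) A B)
    (hBnorm : ∀ i, B i ≤ 2 * (d - 1))
    (hC : Relation.ReflTransGen
      (fun X Y : ℕ →₀ ℕ => ∃ i, 2 * d - 1 ≤ X i ∧ Y = exch d i X) A C)
    (hCnorm : ∀ i, C i ≤ 2 * (d - 1)) : B = C := by
  set r : (ℕ →₀ ℕ) → (ℕ →₀ ℕ) → Prop :=
    fun X Y => ∃ i, 2 * d - 1 ≤ X i ∧ Y = exch d i X with hr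
  have hcr : ∀ a b c, r a b → r a c → ∃ e, Relation.ReflGen r b e ∧
      Relation.ReflTransGen r c e := by
    rintro a b c ⟨i, hi, rfl⟩ ⟨j, hj, rfl⟩
    rcases eq_or_ne i j with rfl | hij
    · exact ⟨exch d i a, Relation.ReflGen.refl, Relation.ReflTransGen.refl⟩
    · refine ⟨exch d j (exch d i a), Relation.ReflGen.single ⟨j, ?_, rfl⟩,
        Relation.ReflTransGen.single ⟨i, ?_, ?_⟩⟩
      · rw [exch_apply]; split_ifs <;> omega
      · rw [exch_apply]; split_ifs <;> omega
      · exact exch_comm d i j a (by omega) (by omega)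
  obtain ⟨Z, hBZ, hCZ⟩ := Relation.church_rosser hcr hB hC
  have norm_stop : ∀ X : ℕ →₀ ℕ, (∀ i, X i ≤ 2 * (d - 1)) →
      ∀ Z, Relation.ReflTransGen r X Z → X = Z := by
    intro X hX Z hXZ
    rcases hXZ.cases_head with rfl | ⟨Y, ⟨i, hi, _⟩, _⟩
    · rfl
    · have := hX i; omega
  rw [norm_stop B hBnorm Z hBZ, norm_stop C hCnorm Z hCZ]
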